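/- Let G be a graph with a Δ-disk representation, let v be a vertex with disk D_v of center (x_v, y_v), and let t be a real number with 0 ≤ t ≤ min(x_v, y_v). If D_v ∩ [0, t]² is non-empty, then the point (t, t) belongs to D_v. -/
import Mathlib


/-- A Δ-disk representation of a simple graph `G`: each vertex `v` gets a
closed disk with center `c v = (x_v, y_v)`, `x_v > 0`, `y_v > 0`, and radius
`r v` with `max x_v y_v ≤ r v < √(x_v² + y_v²)` (the disk meets both axes but
misses the origin); distinct vertices are adjacent iff their disks intersect. -/
def IsDeltaDiskRep {V : Type*} (G : SimpleGraph V)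
    (c : V → EuclideanSpace ℝ (Fin 2)) (r : V → ℝ) : Prop :=
  (∀ v, 0 < c v 0) ∧ (∀ v, 0 < c v 1) ∧
  (∀ v, max (c v 0) (c v 1) ≤ r v) ∧ (∀ v, r v < dist (c v) 0) ∧
  ∀ u v, u ≠ v → (G.Adj u v ↔
    (Metric.closedBall (c u) (r u) ∩ Metric.closedBall (c v) (r v)).Nonempty)

/-- In a Δ-disk representation, if `0 ≤ t ≤ min (x_v, y_v)` and the disk `D_v`
meets the square `[0, t]²`, then `D_v` contains the point `(t, t)`. -/
theorem deltaDisk_convexity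
    {V : Type*} (G : SimpleGraph V)
    (c : V → EuclideanSpace ℝ (Fin 2)) (r : V → ℝ)
    (h : IsDeltaDiskRep G c r)
    (v : V) (t : ℝ) (ht0 : 0 ≤ t) (ht : t ≤ min (c v 0) (c v 1))
    (hmeet : ∃ p ∈ Metric.closedBall (c v) (r v),
      0 ≤ p 0 ∧ p 0 ≤ t ∧ 0 ≤ p 1 ∧ p 1 ≤ t) :
    (EuclideanSpace.equiv (Fin 2) ℝ).symm ![t, t] ∈
      Metric.closedBall (c v) (r v) := by
  obtain ⟨p, hp, hp0, hp0t, hp1, hp1t⟩ := hmeet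
  rw [Metric.mem_closedBall] at hp ⊢
  have hq0 : ((EuclideanSpace.equiv (Fin 2) ℝ).symm ![t, t]) 0 = t := rfl
  have hq1 : ((EuclideanSpace.equiv (Fin 2) ℝ).symm ![t, t]) 1 = t := rfl
  have hd : dist ((EuclideanSpace.equiv (Fin 2) ℝ).symm ![t, t]) (c v) ≤
      dist p (c v) := by
    rw [EuclideanSpace.dist_eq, EuclideanSpace.dist_eq]
    apply Real.sqrt_le_sqrt
    rw [Fin.sum_univ_two, Fin.sum_univ_two, hq0, hq1]
    simp only [Real.dist_eq, sq_abs]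
    obtain ⟨ht1, ht2⟩ := le_min_iff.mp ht
    nlinarith [sq_nonneg (t - p 0), sq_nonneg (t - p 1)]
  linarith
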